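/- For the admission-control MDP with value iteration defined by V_0(x,ℓ)=0 and V_{n+1}(x,ℓ)=min{Q_{n+1}(x,ℓ,0), Q_{n+1}(x,ℓ,1)}, where Q_{n+1}(x,ℓ,0) = (1/(α+ν))(h·max(x−k,0) + c(ℓ)) + β[δ(x)·Σ_{r=1}^{R} P(r)·V_n(min(x+1,X), min(ℓ+r,L)) + (1−δ(x))·Σ_{r=1}^{R} P(r)·V_n(max(x−1,0), max(ℓ−r,0))] and Q_{n+1}(x,ℓ,1) = (1/(α+ν))(h·max(x−k,0) + c(ℓ) + p(ℓ)) + β(1−δ(x))·Σ_{r=1}^{R} P(r)·V_n(max(x−1,0), max(ℓ−r,0)), if the holding/penalty functions c and p are weakly increasing in ℓ, then for every n ≥ 0 and every fixed x ∈ {0,...,X}, the function ℓ ↦ V_n(x,ℓ) is weakly increasing on {0,...,L}. -/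

import Mathlib

/-!
Induction on `n`. Both Q-factors of `V (n+1)` are built from `c ℓ`, `p ℓ` and `P`-weighted sums of
`V n` at loads `min (ℓ + r) L` and `ℓ - r`, all monotone in `ℓ`, combined with the nonnegative
coefficients `1 / (α + ν)`, `β`, `δ x` and `1 - δ x`; a minimum of monotone functions is monotone.
-/

open Finset

lemma div_add_mem_Icc {a b : ℝ} (ha : 0 < a) (hb : 0 ≤ b) : a / (a + b) ∈ Set.Icc 0 1 :=
  ⟨by positivity, div_le_one_of_le₀ (le_add_of_nonneg_right hb) (by positivity)⟩

section ValueIteration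

variable {L R : ℕ} {a beta : ℝ} {g c p P δ : ℕ → ℝ} {up down : ℕ → ℕ}
  {V : ℕ → ℕ → ℕ → ℝ} {Q : ℕ → ℕ → ℕ → Fin 2 → ℝ}

theorem monotone_valueIterate (ha : 0 ≤ a) (hbeta : 0 ≤ beta)
    (hc : Monotone c) (hp : Monotone p) (hP : ∀ r, 0 ≤ P r) (hδ : ∀ x, δ x ∈ Set.Icc 0 1)
    (hV0 : ∀ x ℓ, V 0 x ℓ = 0)
    (hQ0 : ∀ n x ℓ, Q (n+1) x ℓ 0 =
      a * (g x + c ℓ)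
      + beta * (δ x * ∑ r ∈ Icc 1 R, P r * V n (up x) (min (ℓ+r) L)
        + (1 - δ x) * ∑ r ∈ Icc 1 R, P r * V n (down x) (ℓ-r)))
    (hQ1 : ∀ n x ℓ, Q (n+1) x ℓ 1 =
      a * (g x + c ℓ + p ℓ)
      + beta * (1 - δ x) * ∑ r ∈ Icc 1 R, P r * V n (down x) (ℓ-r))
    (hVsucc : ∀ n x ℓ, V (n+1) x ℓ = min (Q (n+1) x ℓ 0) (Q (n+1) x ℓ 1)) :
    ∀ n x, Monotone (V n x) := by
  intro n
  induction n with
  | zero => intro x ℓ₁ ℓ₂ _; simp only [hV0, le_refl]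
  | succ n ih =>
    intro x ℓ₁ ℓ₂ hℓ
    obtain ⟨hδ0, hδ1⟩ := hδ x
    have hδ1' : 0 ≤ 1 - δ x := sub_nonneg.mpr hδ1
    rw [hVsucc, hVsucc, hQ0, hQ0, hQ1, hQ1]
    have hup : ∀ r, V n (up x) (min (ℓ₁ + r) L) ≤ V n (up x) (min (ℓ₂ + r) L) := fun r =>
      ih _ (min_le_min_right L (Nat.add_le_add_right hℓ r))
    have hdown : ∀ r, V n (down x) (ℓ₁ - r) ≤ V n (down x) (ℓ₂ - r) := fun r =>
      ih _ (Nat.sub_le_sub_right hℓ r)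
    gcongr <;> first | exact hP _ | exact hc hℓ | exact hp hℓ | exact hup _ | exact hdown _

end ValueIteration

theorem stmt_0_general
    (X L R k : ℕ) (lam mu alpha nu h beta : ℝ)
    (c p P : ℕ → ℝ)
    (hlam : 0 < lam) (hmu : 0 < mu) (halpha : 0 < alpha) (hnu : 0 < nu)
    (hbeta0 : 0 ≤ beta)
    (hc : Monotone c) (hp : Monotone p)
    (hP : ∀ r, 0 ≤ P r)
    (δ : ℕ → ℝ) (hδ : ∀ x, δ x = lam / (lam + (min k x : ℕ) * mu))
    (V : ℕ → ℕ → ℕ → ℝ) (Q : ℕ → ℕ → ℕ → Fin 2 → ℝ)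
    (hV0 : ∀ x ℓ, V 0 x ℓ = 0)
    (hQ0 : ∀ n x ℓ, Q (n+1) x ℓ 0 =
      (1 / (alpha + nu)) * (h * ((x - k : ℕ) : ℝ) + c ℓ)
      + beta * (δ x * ∑ r ∈ Finset.Icc 1 R, P r * V n (min (x+1) X) (min (ℓ+r) L)
        + (1 - δ x) * ∑ r ∈ Finset.Icc 1 R, P r * V n (x-1) (ℓ-r)))
    (hQ1 : ∀ n x ℓ, Q (n+1) x ℓ 1 =
      (1 / (alpha + nu)) * (h * ((x - k : ℕ) : ℝ) + c ℓ + p ℓ)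
      + beta * (1 - δ x) * ∑ r ∈ Finset.Icc 1 R, P r * V n (x-1) (ℓ-r))
    (hVsucc : ∀ n x ℓ, V (n+1) x ℓ = min (Q (n+1) x ℓ 0) (Q (n+1) x ℓ 1)) :
    ∀ n x ℓ₁ ℓ₂, x ≤ X → ℓ₁ ≤ ℓ₂ → ℓ₂ ≤ L → V n x ℓ₁ ≤ V n x ℓ₂ := by
  have hδ_mem : ∀ x, δ x ∈ Set.Icc 0 1 := fun x =>
    hδ x ▸ div_add_mem_Icc hlam (by positivity)
  have hmono := monotone_valueIterate (by positivity) hbeta0 hc hp hP hδ_mem hV0 hQ0 hQ1 hVsucc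
  intro n x ℓ₁ ℓ₂ _ hℓ _
  exact hmono n x hℓ

/-- Proposition 1 (induction step / Lemma 1): the value-iteration iterates
`V_n(x, ℓ)` of the admission-control MDP are weakly increasing in the load `ℓ`. -/
theorem stmt_0
    (X L R k : ℕ) (lam mu alpha nu h beta : ℝ)
    (c p P : ℕ → ℝ)
    (hlam : 0 < lam) (hmu : 0 < mu) (halpha : 0 < alpha) (hnu : 0 < nu)
    (hh : 0 ≤ h) (hbeta0 : 0 ≤ beta) (hbeta1 : beta < 1)
    (hc : Monotone c) (hp : Monotone p)
    (hc0 : ∀ ℓ, 0 ≤ c ℓ) (hp0 : ∀ ℓ, 0 ≤ p ℓ)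
    (hP : ∀ r, 0 ≤ P r) (hPsum : ∑ r ∈ Finset.Icc 1 R, P r = 1)
    (δ : ℕ → ℝ) (hδ : ∀ x, δ x = lam / (lam + (min k x : ℕ) * mu))
    (V : ℕ → ℕ → ℕ → ℝ) (Q : ℕ → ℕ → ℕ → Fin 2 → ℝ)
    (hV0 : ∀ x ℓ, V 0 x ℓ = 0)
    (hQ0 : ∀ n x ℓ, Q (n+1) x ℓ 0 =
      (1 / (alpha + nu)) * (h * ((x - k : ℕ) : ℝ) + c ℓ)
      + beta * (δ x * ∑ r ∈ Finset.Icc 1 R, P r * V n (min (x+1) X) (min (ℓ+r) L)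
        + (1 - δ x) * ∑ r ∈ Finset.Icc 1 R, P r * V n (x-1) (ℓ-r)))
    (hQ1 : ∀ n x ℓ, Q (n+1) x ℓ 1 =
      (1 / (alpha + nu)) * (h * ((x - k : ℕ) : ℝ) + c ℓ + p ℓ)
      + beta * (1 - δ x) * ∑ r ∈ Finset.Icc 1 R, P r * V n (x-1) (ℓ-r))
    (hVsucc : ∀ n x ℓ, V (n+1) x ℓ = min (Q (n+1) x ℓ 0) (Q (n+1) x ℓ 1)) :
    ∀ n x ℓ₁ ℓ₂, x ≤ X → ℓ₁ ≤ ℓ₂ → ℓ₂ ≤ L → V n x ℓ₁ ≤ V n x ℓ₂ :=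
  stmt_0_general X L R k lam mu alpha nu h beta c p P hlam hmu halpha hnu hbeta0 hc hp hP δ hδ V Q
    hV0 hQ0 hQ1 hVsucc
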